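/- Fix N ≥ 3 and an increment field δ⁽⁰⁾ ∈ ℝ^N with δ⁽⁰⁾(i) ≥ 0 for all i, and set M := ∑_{i=1}^N δ⁽⁰⁾(i). Let δ⁽ᵐ⁾ denote the result of applying m full cyclic sweeps avoiding the closing edge (each sweep applies the linear increment update successively at edges k = 1,…,N−1). Then: (i) δ⁽ᵐ⁾(i) ≥ 0 for all m ≥ 0 and all i; (ii) ∑_{i=1}^N δ⁽ᵐ⁾(i) = M for all m; (iii) the sequence m ↦ δ⁽ᵐ⁾(N) is nondecreasing; and (iv) with c := 2^{−(N−2)}, one has M − δ⁽ᵐ⁾(N) ≤ (1−c)^m·(M − δ⁽⁰⁾(N)) for all m ≥ 0. In particular δ⁽ᵐ⁾(N) → M as m → ∞. -/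

import Mathlib

open Filter

/-- The linear increment update at edge `k`: `δ(k)` is reset to `0` and `δ(k)/2` is added
to each of the cyclic neighbours `δ(k-1)` and `δ(k+1)`. -/
noncomputable def incUpdate {N : ℕ} (δ : ZMod N → ℝ) (k : ZMod N) : ZMod N → ℝ :=
  fun i => if i = k then 0
    else if i = k - 1 ∨ i = k + 1 then δ i + δ k / 2
    else δ i

/-- Apply the linear increment updates successively at edges `1, 2, …, j`. -/
noncomputable def sweepAux {N : ℕ} (δ : ZMod N → ℝ) : ℕ → ZMod N → ℝ
  | 0 => δ
  | j + 1 => incUpdate (sweepAux δ j) ((j + 1 : ℕ) : ZMod N)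

/-- One cyclic sweep avoiding the closing edge: updates at edges `1, …, N-1`
(vertex `N` is `0` in `ZMod N`). -/
noncomputable def sweep {N : ℕ} (δ : ZMod N → ℝ) : ZMod N → ℝ := sweepAux δ (N - 1)

/-!
Nonnegativity and conservation of mass are preserved by every update. In one sweep the update at
edge `1` moves half of `δ 1` to the closing vertex, while the mass at vertices `2, …, N - 1` is
carried along the chain, losing at most half at each step, so the last update at edge `N - 1`
delivers at least `2⁻⁽ᴺ⁻²⁾` of it to the closing vertex. Hence each sweep recovers a fraction
`2⁻⁽ᴺ⁻²⁾` of the deficit `M - δ 0`, which therefore decays geometrically.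
-/

open Finset

namespace ZMod

theorem natCast_ne_natCast_of_lt {N a b : ℕ} (ha : a < N) (hb : b < N) (hab : a ≠ b) :
    (a : ZMod N) ≠ b := by
  rwa [ne_eq, natCast_eq_natCast_iff', Nat.mod_eq_of_lt ha, Nat.mod_eq_of_lt hb]

theorem sum_eq_sum_range {N : ℕ} [NeZero N] {M : Type*} [AddCommMonoid M] (f : ZMod N → M) :
    ∑ i, f i = ∑ i ∈ range N, f i :=
  sum_nbij' val Nat.cast (by simp [val_lt]) (by simp) (by simp)
    (fun _ ha => val_cast_of_lt (mem_range.mp ha)) (by simp)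

end ZMod

section incUpdate

variable {N : ℕ} (δ : ZMod N → ℝ) (k : ZMod N)

theorem incUpdate_apply_of_ne {i : ZMod N} (hk : i ≠ k) (hl : i ≠ k - 1) (hr : i ≠ k + 1) :
    incUpdate δ k i = δ i := by
  simp [incUpdate, hk, hl, hr]

theorem incUpdate_apply_sub_one [Nontrivial (ZMod N)] :
    incUpdate δ k (k - 1) = δ (k - 1) + δ k / 2 := by
  simp [incUpdate]

theorem incUpdate_apply_add_one [Nontrivial (ZMod N)] :
    incUpdate δ k (k + 1) = δ (k + 1) + δ k / 2 := by
  simp [incUpdate]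

theorem incUpdate_nonneg {δ : ZMod N → ℝ} (hδ : 0 ≤ δ) : 0 ≤ incUpdate δ k := fun i => by
  have hi : 0 ≤ δ i := hδ i
  have hk : 0 ≤ δ k := hδ k
  simp only [Pi.zero_apply, incUpdate]
  split_ifs <;> linarith

theorem incUpdate_eq_add_single (hN : 3 ≤ N) :
    incUpdate δ k = δ + Pi.single k (-δ k) + Pi.single (k - 1) (δ k / 2)
      + Pi.single (k + 1) (δ k / 2) := by
  have : Fact (1 < N) := ⟨by omega⟩
  have h2 : (2 : ZMod N) ≠ 0 := by
    simpa using ZMod.natCast_ne_natCast_of_lt (a := 2) (b := 0) (by omega) (by omega) (by omega)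
  have hlr : k - 1 ≠ k + 1 := fun h => h2 (by linear_combination -h)
  ext i
  by_cases hk : i = k
  · subst hk; simp [incUpdate]
  by_cases hl : i = k - 1
  · subst hl; simp [incUpdate, hlr]
  by_cases hr : i = k + 1
  · subst hr; simp [incUpdate, hlr.symm]
  simp [incUpdate, hk, hl, hr]

theorem sum_incUpdate [NeZero N] (hN : 3 ≤ N) : ∑ i, incUpdate δ k i = ∑ i, δ i := by
  simp [incUpdate_eq_add_single δ k hN, sum_add_distrib]
  ring

end incUpdate

section sweepAux

variable {N : ℕ} (δ : ZMod N → ℝ)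

theorem sweepAux_succ (j : ℕ) :
    sweepAux δ (j + 1) = incUpdate (sweepAux δ j) (j + 1 : ℕ) := rfl

theorem sweepAux_nonneg {δ : ZMod N → ℝ} (hδ : 0 ≤ δ) (j : ℕ) : 0 ≤ sweepAux δ j := by
  induction j with
  | zero => exact hδ
  | succ j ih => exact incUpdate_nonneg _ ih

theorem sum_sweepAux [NeZero N] (hN : 3 ≤ N) (j : ℕ) : ∑ i, sweepAux δ j i = ∑ i, δ i := by
  induction j with
  | zero => rfl
  | succ j ih => rw [sweepAux_succ, sum_incUpdate _ _ hN, ih]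

theorem sweepAux_apply_of_lt {j n : ℕ} (hjn : j + 1 < n) (hn : n < N) :
    sweepAux δ j n = δ n := by
  induction j with
  | zero => rfl
  | succ j ih =>
    have hne (m : ℕ) (hm : m < n) : (n : ZMod N) ≠ m :=
      ZMod.natCast_ne_natCast_of_lt hn (by omega) (by omega)
    rw [sweepAux_succ, incUpdate_apply_of_ne _ _ (hne _ (by omega))
      (by rw [Nat.cast_succ, add_sub_cancel_right]; exact hne j (by omega))
      (by rw [← Nat.cast_succ]; exact hne (j + 2) (by omega)), ih (by omega)]

theorem sweepAux_apply_zero {j : ℕ} (hj : 1 ≤ j) (hjN : j + 2 ≤ N) :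
    sweepAux δ j 0 = δ 0 + δ 1 / 2 := by
  have : Fact (1 < N) := ⟨by omega⟩
  induction j, hj using Nat.le_induction with
  | base => simpa [sweepAux] using incUpdate_apply_sub_one δ 1
  | succ j hj ih =>
    have hne (m : ℕ) (hm0 : 0 < m) (hm : m < N) : (0 : ZMod N) ≠ m := by
      simpa using ZMod.natCast_ne_natCast_of_lt (a := 0) (by omega) hm (by omega)
    rw [sweepAux_succ, incUpdate_apply_of_ne _ _ (hne _ (by omega) (by omega))
      (by rw [Nat.cast_succ, add_sub_cancel_right]; exact hne j (by omega) (by omega))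
      (by rw [← Nat.cast_succ]; exact hne (j + 2) (by omega) (by omega)), ih (by omega)]

theorem le_sweepAux_succ {δ : ZMod N → ℝ} (hδ : 0 ≤ δ) {j : ℕ} (hj : j + 2 < N) :
    (1 / 2) ^ j * ∑ i ∈ range (j + 1), δ (i + 2 : ℕ) ≤ sweepAux δ (j + 1) (j + 2 : ℕ) := by
  have : Fact (1 < N) := ⟨by omega⟩
  induction j with
  | zero =>
    have h := incUpdate_apply_add_one δ 1
    have h1 : 0 ≤ δ 1 := hδ 1
    norm_num [sweepAux] at h ⊢
    linarith
  | succ j ih =>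
    have hδj : 0 ≤ δ (j + 3 : ℕ) := hδ _
    have hc : (1 / 2 : ℝ) ^ j * (1 / 2) ≤ 1 := by
      rw [← pow_succ]; exact pow_le_one₀ (by norm_num) (by norm_num)
    have hnext : ((j + 1 + 2 : ℕ) : ZMod N) = ((j + 1 + 1 : ℕ) : ZMod N) + 1 := by
      push_cast; ring
    rw [sweepAux_succ, hnext, incUpdate_apply_add_one, ← hnext,
      sweepAux_apply_of_lt _ (by omega) hj, sum_range_succ, pow_succ]
    linarith [ih (by omega), mul_le_mul_of_nonneg_right hc hδj]

end sweepAux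

theorem le_sweep_apply_zero {N : ℕ} [NeZero N] (hN : 3 ≤ N) {δ : ZMod N → ℝ} (hδ : 0 ≤ δ) :
    δ 0 + (1 / 2) ^ (N - 2) * (∑ i, δ i - δ 0) ≤ sweep δ 0 := by
  obtain ⟨n, rfl⟩ : ∃ n, N = n + 3 := ⟨N - 3, by omega⟩
  have : Fact (1 < n + 3) := ⟨by omega⟩
  have hzero : (0 : ZMod (n + 3)) = ((n + 1 + 1 : ℕ) : ZMod (n + 3)) + 1 := by
    rw [← Nat.cast_succ, ZMod.natCast_self]
  have hsweep : sweep δ 0 = sweepAux δ (n + 1) 0 + sweepAux δ (n + 1) (n + 2 : ℕ) / 2 := by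
    rw [sweep, show n + 3 - 1 = n + 1 + 1 by omega, sweepAux_succ, hzero,
      incUpdate_apply_add_one, ← hzero]
  have hsum : ∑ i, δ i = δ 0 + δ 1 + ∑ i ∈ range (n + 1), δ (i + 2 : ℕ) := by
    rw [ZMod.sum_eq_sum_range, sum_range_succ', sum_range_succ']
    simp only [zero_add, Nat.cast_zero, Nat.cast_one]
    ring
  have hc : (1 / 2 : ℝ) ^ n * (1 / 2) ≤ 1 / 2 := by
    rw [← pow_succ]; exact pow_le_of_le_one (by norm_num) (by norm_num) (by omega)
  have hδ1 : 0 ≤ δ 1 := hδ 1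
  rw [hsweep, sweepAux_apply_zero δ (by omega) (by omega), hsum,
    show n + 3 - 2 = n + 1 by omega, pow_succ]
  linarith [le_sweepAux_succ hδ (j := n) (by omega), mul_le_mul_of_nonneg_right hc hδ1]

section deficit

variable {x : ℕ → ℝ} {M c : ℝ} (hstep : ∀ m, x m + c * (M - x m) ≤ x (m + 1))
include hstep

theorem monotone_of_le_add_mul_deficit (hc : 0 ≤ c) (hx : ∀ m, x m ≤ M) : Monotone x :=
  monotone_nat_of_le_succ fun m => by linarith [hstep m, mul_nonneg hc (sub_nonneg.2 (hx m))]

theorem deficit_le_geometric_of_le_add_mul_deficit (hc : c ≤ 1) (m : ℕ) :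
    M - x m ≤ (1 - c) ^ m * (M - x 0) := by
  induction m with
  | zero => simp
  | succ m ih =>
    calc M - x (m + 1) ≤ (1 - c) * (M - x m) := by linarith [hstep m]
      _ ≤ (1 - c) * ((1 - c) ^ m * (M - x 0)) := by gcongr
      _ = (1 - c) ^ (m + 1) * (M - x 0) := by ring

theorem tendsto_of_le_add_mul_deficit (hc₀ : 0 < c) (hc₁ : c ≤ 1) (hx : ∀ m, x m ≤ M) :
    Tendsto x atTop (nhds M) := by
  have hgeom : Tendsto (fun m => (1 - c) ^ m * (M - x 0)) atTop (nhds 0) := by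
    simpa using (tendsto_pow_atTop_nhds_zero_of_lt_one (by linarith) (by linarith)).mul_const
      (M - x 0)
  have hdeficit : Tendsto (fun m => M - x m) atTop (nhds 0) :=
    squeeze_zero (fun m => sub_nonneg.2 (hx m))
      (deficit_le_geometric_of_le_add_mul_deficit hstep hc₁) hgeom
  simpa using hdeficit.const_sub M

end deficit

/-- Monotone accumulation at the closing edge.  Starting from a nonnegative
increment field with total mass `M`, iterated cyclic sweeps preserve nonnegativity and the
total mass, the value at the closing edge (vertex `N`, i.e. `0` in `ZMod N`) is
nondecreasing, the deficit contracts geometrically with ratio `1 - 2^{-(N-2)}`, and the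
closing increment converges to `M`. -/
theorem monotone_accumulation_closing_edge
    (N : ℕ) [NeZero N] (hN : 3 ≤ N)
    (δ0 : ZMod N → ℝ) (hpos : ∀ i, 0 ≤ δ0 i)
    (M : ℝ) (hM : M = ∑ i : ZMod N, δ0 i) :
    (∀ (m : ℕ) (i : ZMod N), 0 ≤ (sweep^[m] δ0) i) ∧
    (∀ m : ℕ, ∑ i : ZMod N, (sweep^[m] δ0) i = M) ∧
    (Monotone fun m : ℕ => (sweep^[m] δ0) 0) ∧
    (∀ m : ℕ, M - (sweep^[m] δ0) 0
      ≤ (1 - (1 / 2 : ℝ) ^ (N - 2)) ^ m * (M - δ0 0)) ∧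
    Tendsto (fun m : ℕ => (sweep^[m] δ0) 0) atTop (nhds M) := by
  have hnonneg (m : ℕ) : 0 ≤ sweep^[m] δ0 :=
    Function.Iterate.rec (fun δ => 0 ≤ δ) hpos (fun _ hδ => sweepAux_nonneg hδ _) m
  have hsum (m : ℕ) : ∑ i, (sweep^[m] δ0) i = M :=
    Function.Iterate.rec (fun δ => ∑ i, δ i = M) hM.symm
      (fun δ h => (sum_sweepAux δ hN _).trans h) m
  have hle (m : ℕ) : (sweep^[m] δ0) 0 ≤ M :=
    hsum m ▸ single_le_sum (fun i _ => hnonneg m i) (mem_univ 0)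
  have hstep (m : ℕ) : (sweep^[m] δ0) 0 + (1 / 2) ^ (N - 2) * (M - (sweep^[m] δ0) 0)
      ≤ (sweep^[m + 1] δ0) 0 := by
    rw [Function.iterate_succ_apply', ← hsum m]
    exact le_sweep_apply_zero hN (hnonneg m)
  have hc₀ : (0 : ℝ) < (1 / 2) ^ (N - 2) := by positivity
  have hc₁ : (1 / 2 : ℝ) ^ (N - 2) ≤ 1 := pow_le_one₀ (by norm_num) (by norm_num)
  exact ⟨hnonneg, hsum, monotone_of_le_add_mul_deficit hstep hc₀.le hle,
    deficit_le_geometric_of_le_add_mul_deficit hstep hc₁,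
    tendsto_of_le_add_mul_deficit hstep hc₀ hc₁ hle⟩
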